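/- arXiv:2206.01481 — 5 statements merged into one kernel-verified Lean document; each statement's English description precedes it below -/
import Mathlib

section
/- Let c0, c1, c2 : ℝ → ℂ be continuous and suppose that for all z on the unit circle and all t ≥ 0, Re(conj(c0(t))·z + c1(t) + c2(t)·z) ≤ 0. Then the closed unit disc is forward invariant for the ODE z' = c0(t) + c1(t)·z + c2(t)·z², i.e., any solution with |z(0)| ≤ 1 satisfies |z(t)| ≤ 1 for all t ≥ 0. -/
/-!
Along a solution, `(|z|² - 1)' = 2 Re(conj z · z')`. Writing `z = r w` with `|w| = 1`,
`Re(conj z · z') = r Re(conj c0 · w + c1 + c2 w) + (r² - r) Re c1 + (r³ - r) Re(c2 w)`; the first term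
is `≤ 0` by hypothesis and the others are `O(r² - 1)` while `r ≥ 1` stays bounded. So outside the
disc `|z|² - 1` obeys a linear Gronwall inequality and, starting `≤ 0`, can never become positive.
-/

open Complex Set

/-- Compare `f` with the barriers `ε e^{(K+1)(x-a)}`, which it cannot touch from below, and let
`ε → 0`. -/
theorem image_nonpos_of_deriv_right_le_mul_of_nonneg {f f' : ℝ → ℝ} {a b K : ℝ}
    (hf : ContinuousOn f (Icc a b)) (hf' : ∀ x ∈ Ico a b, HasDerivWithinAt f (f' x) (Ici x) x)
    (ha : f a ≤ 0) (bound : ∀ x ∈ Ico a b, 0 ≤ f x → f' x ≤ K * f x) :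
    ∀ ⦃x⦄, x ∈ Icc a b → f x ≤ 0 := by
  intro x hx
  have barrier : ∀ ε > 0, f x ≤ ε * Real.exp ((K + 1) * (x - a)) := by
    intro ε hε
    refine image_le_of_deriv_right_lt_deriv_boundary (B := fun y ↦ ε * Real.exp ((K + 1) * (y - a)))
      (B' := fun y ↦ (K + 1) * (ε * Real.exp ((K + 1) * (y - a))))
      hf hf' (by simpa using ha.trans hε.le) (fun y ↦ ?_) (fun y _ hy ↦ ?_) hx
    · exact ((((hasDerivAt_id' y).sub_const a).const_mul (K + 1)).exp.const_mul ε).congr_deriv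
        (by ring)
    · have hB : 0 < ε * Real.exp ((K + 1) * (y - a)) := by positivity
      calc f' y ≤ K * f y := bound y ‹_› (hy ▸ hB.le)
        _ < (K + 1) * (ε * Real.exp ((K + 1) * (y - a))) := by rw [hy]; linarith
  refine le_of_forall_pos_le_add fun δ hδ ↦ ?_
  have hE : 0 < Real.exp ((K + 1) * (x - a)) := Real.exp_pos _
  calc f x ≤ δ / Real.exp ((K + 1) * (x - a)) * Real.exp ((K + 1) * (x - a)) :=
        barrier _ (div_pos hδ hE)
    _ = 0 + δ := by field_simp; ring

theorem re_conj_mul_riccati_le (a b c z : ℂ)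
    (hcircle : ∀ w : ℂ, ‖w‖ = 1 → ((starRingEnd ℂ) a * w + b + c * w).re ≤ 0) (hz : 1 ≤ ‖z‖) :
    ((starRingEnd ℂ) z * (a + b * z + c * z ^ 2)).re ≤ (‖b‖ + ‖c‖ * ‖z‖) * (‖z‖ ^ 2 - 1) := by
  obtain ⟨w, hw, hzw⟩ : ∃ w : ℂ, ‖w‖ = 1 ∧ z = ‖z‖ * w :=
    ⟨exp (arg z * I), norm_exp_ofReal_mul_I _, (norm_mul_exp_arg_mul_I z).symm⟩
  set r := ‖z‖
  have hww : (starRingEnd ℂ) w * w = 1 := by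
    rw [← normSq_eq_conj_mul_self, normSq_eq_norm_sq, hw]; norm_num
  have split : (starRingEnd ℂ) z * (a + b * z + c * z ^ 2) =
      r * ((starRingEnd ℂ) w * a + b + c * w) + (r ^ 2 - r : ℝ) * b + (r ^ 3 - r : ℝ) * (c * w) := by
    rw [hzw, map_mul, conj_ofReal]; push_cast
    linear_combination (r ^ 2 * b + r ^ 3 * c * w) * hww
  have hre : ((starRingEnd ℂ) w * a + b + c * w).re = ((starRingEnd ℂ) a * w + b + c * w).re := by
    simp only [add_re, mul_re, conj_re, conj_im]; ring
  have hb : b.re ≤ ‖b‖ := re_le_norm b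
  have hc : (c * w).re ≤ ‖c‖ := by simpa [hw] using re_le_norm (c * w)
  rw [split, add_re, add_re, re_ofReal_mul, re_ofReal_mul, re_ofReal_mul, hre]
  nlinarith [mul_nonpos_of_nonneg_of_nonpos (by positivity : 0 ≤ r) (hcircle w hw),
    mul_le_mul_of_nonneg_left hb (by nlinarith : (0:ℝ) ≤ r ^ 2 - r),
    mul_le_mul_of_nonneg_left hc (by nlinarith : (0:ℝ) ≤ r ^ 3 - r),
    mul_nonneg (sub_nonneg.2 hz) (norm_nonneg b)]

theorem riccati_disc_forward_invariant_general
    (c0 c1 c2 : ℝ → ℂ)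
    (hc1 : Continuous c1) (hc2 : Continuous c2)
    (hineq : ∀ (w : ℂ) (t : ℝ), ‖w‖ = 1 → 0 ≤ t →
      ((starRingEnd ℂ) (c0 t) * w + c1 t + c2 t * w).re ≤ 0)
    (z : ℝ → ℂ)
    (hz : ∀ t, HasDerivAt z (c0 t + c1 t * z t + c2 t * (z t) ^ 2) t)
    (h0 : ‖z 0‖ ≤ 1) :
    ∀ t, 0 ≤ t → ‖z t‖ ≤ 1 := by
  intro T hT
  have hzc : Continuous z := continuous_iff_continuousAt.2 fun t ↦ (hz t).continuousAt
  obtain ⟨K, hK⟩ := (isCompact_Icc (a := 0) (b := T)).bddAbove_image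
    (f := fun t ↦ ‖c1 t‖ + ‖c2 t‖ * ‖z t‖) (by fun_prop)
  have hsq : ‖z T‖ ^ 2 - 1 ≤ 0 := by
    refine image_nonpos_of_deriv_right_le_mul_of_nonneg (f := fun t ↦ ‖z t‖ ^ 2 - 1) (K := 2 * K)
      (by fun_prop) (fun t _ ↦ ((hz t).norm_sq.sub_const 1).hasDerivWithinAt)
      (by nlinarith [norm_nonneg (z 0)]) (fun t ht hnonneg ↦ ?_) ⟨hT, le_rfl⟩
    have hz1 : 1 ≤ ‖z t‖ := (one_le_sq_iff₀ (norm_nonneg _)).1 (by linarith)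
    have hle := re_conj_mul_riccati_le _ _ _ _ (fun w hw ↦ hineq w t hw ht.1) hz1
    have hKt : ‖c1 t‖ + ‖c2 t‖ * ‖z t‖ ≤ K := hK (mem_image_of_mem _ (Ico_subset_Icc_self ht))
    rw [Complex.inner, mul_comm _ ((starRingEnd ℂ) (z t))]
    linarith [mul_le_mul_of_nonneg_right hKt hnonneg]
  nlinarith [norm_nonneg (z T)]

theorem riccati_disc_forward_invariant
    (c0 c1 c2 : ℝ → ℂ)
    (hc0 : Continuous c0) (hc1 : Continuous c1) (hc2 : Continuous c2)
    (hineq : ∀ (w : ℂ) (t : ℝ), ‖w‖ = 1 → 0 ≤ t →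
      ((starRingEnd ℂ) (c0 t) * w + c1 t + c2 t * w).re ≤ 0)
    (z : ℝ → ℂ)
    (hz : ∀ t, HasDerivAt z (c0 t + c1 t * z t + c2 t * (z t) ^ 2) t)
    (h0 : ‖z 0‖ ≤ 1) :
    ∀ t, 0 ≤ t → ‖z t‖ ≤ 1 :=
  riccati_disc_forward_invariant_general c0 c1 c2 hc1 hc2 hineq z hz h0
end

section
/- For the Ott–Antonsen equation for driven phase oscillators, z' = (−γ + i ω₀) z + W(t)/2 − conj(W(t)) z²/2 with γ ≥ 0, the quantity Re(conj(c0(t)) z + c1(t) + c2(t) z) equals −γ ≤ 0 for every z on the unit circle, hence the closed unit disc is forward invariant. -/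
/-!
Along a solution, `u = ‖z‖² - 1` satisfies `u' = -2γ‖z‖² - u · Re(conj W · z)`, and the first term
is nonpositive because `γ ≥ 0`. So `u' ≤ r u` with the continuous coefficient
`r = -Re(conj W · z)`, and the integrating factor `exp (-∫ r)` makes `exp (-∫ r) · u` antitone:
the sign of `u` cannot turn from nonpositive to positive.
-/

open Complex

theorem nonpos_of_hasDerivAt_le_mul_self {u u' r : ℝ → ℝ} (hr : Continuous r)
    (hu : ∀ t, HasDerivAt u (u' t) t) (hle : ∀ t, u' t ≤ r t * u t) {a b : ℝ} (hab : a ≤ b)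
    (ha : u a ≤ 0) : u b ≤ 0 := by
  set R : ℝ → ℝ := fun t => ∫ s in a..t, r s
  have hR : ∀ t, HasDerivAt R (r t) t := fun t =>
    (hr.integral_hasStrictDerivAt a t).hasDerivAt
  have hanti : Antitone fun t => Real.exp (-R t) * u t := by
    refine antitone_of_hasDerivAt_nonpos
      (fun t => ((hR t).neg.exp).mul (hu t)) fun t => ?_
    have := mul_le_mul_of_nonneg_left (hle t) (Real.exp_pos (-R t)).le
    simp only [Pi.neg_apply, Pi.zero_apply]
    linarith
  have hb : Real.exp (-R b) * u b ≤ 0 := (hanti hab).trans (by simpa [R] using ha)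
  exact nonpos_of_mul_nonpos_right hb (Real.exp_pos _)

theorem two_mul_re_conj_mul_ottAntonsen (γ ω₀ : ℝ) (w z : ℂ) :
    2 * (starRingEnd ℂ z * ((-(γ : ℂ) + I * ω₀) * z + w / 2
      - starRingEnd ℂ w * z ^ 2 / 2)).re
    = -(2 * γ) * ‖z‖ ^ 2 + (1 - ‖z‖ ^ 2) * (starRingEnd ℂ w * z).re := by
  rw [← normSq_eq_norm_sq]
  simp only [normSq_apply, pow_two, mul_re, mul_im, add_re, add_im, sub_re, sub_im, neg_re, neg_im,
    conj_re, conj_im, ofReal_re, ofReal_im, I_re, I_im, div_ofNat_re, div_ofNat_im]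
  ring

theorem hasDerivAt_norm_sq_sub_one_of_ottAntonsen {γ ω₀ : ℝ} {W z : ℝ → ℂ}
    (hz : ∀ t, HasDerivAt z ((-(γ : ℂ) + I * ω₀) * z t + W t / 2
      - starRingEnd ℂ (W t) * z t ^ 2 / 2) t) (t : ℝ) :
    HasDerivAt (fun s => ‖z s‖ ^ 2 - 1)
      (-(2 * γ) * ‖z t‖ ^ 2 + (1 - ‖z t‖ ^ 2) * (starRingEnd ℂ (W t) * z t).re) t := by
  rw [← two_mul_re_conj_mul_ottAntonsen γ ω₀, mul_comm (starRingEnd ℂ (z t)), ← Complex.inner]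
  exact ((hz t).norm_sq).sub_const 1

theorem ott_antonsen_oscillators_invariant
    (γ ω₀ : ℝ) (hγ : 0 ≤ γ) (W : ℝ → ℂ) (hW : Continuous W) :
    (∀ (w : ℂ) (t : ℝ), ‖w‖ = 1 →
      ((starRingEnd ℂ) (W t / 2) * w + (-(γ : ℂ) + Complex.I * ω₀)
        + (-(starRingEnd ℂ) (W t) / 2) * w).re = -γ) ∧
    (∀ z : ℝ → ℂ,
      (∀ t, HasDerivAt z ((-(γ : ℂ) + Complex.I * ω₀) * z t + W t / 2
        - (starRingEnd ℂ) (W t) * (z t) ^ 2 / 2) t) →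
      ‖z 0‖ ≤ 1 → ∀ t, 0 ≤ t → ‖z t‖ ≤ 1) := by
  refine ⟨fun w t _ => ?_, fun z hz h0 t ht => ?_⟩
  · have : starRingEnd ℂ (W t / 2) * w + (-(γ : ℂ) + I * ω₀)
        + (-starRingEnd ℂ (W t) / 2) * w = -(γ : ℂ) + I * ω₀ := by
      simp only [map_div₀, map_ofNat]
      ring
    rw [this]
    simp
  · have hzc : Continuous z := continuous_iff_continuousAt.2 fun s => (hz s).continuousAt
    have hsq : ‖z t‖ ^ 2 - 1 ≤ 0 := nonpos_of_hasDerivAt_le_mul_self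
      (r := fun s => -(starRingEnd ℂ (W s) * z s).re) (by fun_prop)
      (hasDerivAt_norm_sq_sub_one_of_ottAntonsen hz)
      (fun s => by nlinarith [mul_nonneg hγ (sq_nonneg ‖z s‖)]) ht
      (sub_nonpos.2 (pow_le_one₀ (norm_nonneg _) h0))
    exact (pow_le_one_iff_of_nonneg (norm_nonneg _) two_ne_zero).1 (sub_nonpos.1 hsq)
end

section
/- A holomorphic map from the open unit disc to itself that extends continuously to the closed disc and maps the closed unit disc into the open unit disc has a unique fixed point in the open unit disc. -/
/-!
Write `mobius a z = (z - a) / (1 - conj a * z)`. By compactness `f` maps the closed disc into a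
disc of radius `r < 1`, so the Schwarz lemma applied to `mobius (f w) ∘ f ∘ mobius (-w)` shows
that `f` shrinks the pseudo-hyperbolic distance `‖mobius w z‖` by the factor
`2 r / (1 + r ^ 2) < 1`. Hence a point of the disc of radius `r` minimising the displacement
`‖mobius z (f z)‖` is fixed, and two fixed points are at pseudo-hyperbolic distance zero.
-/

open Complex ComplexConjugate Metric Set

noncomputable def mobius (a z : ℂ) : ℂ := (z - a) / (1 - conj a * z)

section Mobius

variable {a z : ℂ}

theorem mobius_denom_ne_zero (ha : ‖a‖ < 1) (hz : ‖z‖ ≤ 1) : 1 - conj a * z ≠ 0 := by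
  have : ‖conj a * z‖ < 1 := by
    rw [norm_mul, norm_conj]
    exact mul_lt_one_of_nonneg_of_lt_one_left (norm_nonneg a) ha hz
  intro h
  rw [← sub_eq_zero.1 h, norm_one] at this
  exact this.false

theorem sq_norm_denom_sub_sq_norm_num (a z : ℂ) :
    ‖1 - conj a * z‖ ^ 2 - ‖z - a‖ ^ 2 = (1 - ‖a‖ ^ 2) * (1 - ‖z‖ ^ 2) := by
  simp only [Complex.sq_norm, normSq_apply, sub_re, sub_im, mul_re, mul_im, one_re, one_im, conj_re,
    conj_im]
  ring

theorem norm_mobius_le {r : ℝ} (hr : r < 1) (ha : ‖a‖ ≤ r) (hz : ‖z‖ ≤ r) :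
    ‖mobius a z‖ ≤ 2 * r / (1 + r ^ 2) := by
  have hr0 : 0 ≤ r := (norm_nonneg a).trans ha
  have hD : 0 < ‖1 - conj a * z‖ :=
    norm_pos_iff.2 (mobius_denom_ne_zero (ha.trans_lt hr) (hz.trans hr.le))
  have hD_le : ‖1 - conj a * z‖ ≤ 1 + r ^ 2 := by
    calc ‖1 - conj a * z‖ ≤ ‖(1 : ℂ)‖ + ‖a‖ * ‖z‖ := by
          simpa [norm_mul] using norm_sub_le (1 : ℂ) (conj a * z)
      _ ≤ 1 + r ^ 2 := by rw [norm_one, sq]; gcongr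
  have hgap : (1 - r ^ 2) ^ 2 ≤ ‖1 - conj a * z‖ ^ 2 - ‖z - a‖ ^ 2 := by
    rw [sq_norm_denom_sub_sq_norm_num, sq]
    gcongr <;> nlinarith [norm_nonneg a, norm_nonneg z]
  rw [mobius, norm_div, div_le_div_iff₀ hD (by positivity)]
  refine (sq_le_sq₀ (by positivity) (by positivity)).1 ?_
  nlinarith [mul_le_mul_of_nonneg_left hgap (sq_nonneg (1 + r ^ 2)),
    mul_nonneg (sq_nonneg (1 - r ^ 2)) (sub_nonneg.2 (pow_le_pow_left₀ hD.le hD_le 2))]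

theorem two_mul_div_one_add_sq_lt_one {r : ℝ} (hr : r < 1) : 2 * r / (1 + r ^ 2) < 1 := by
  rw [div_lt_one (by positivity)]
  nlinarith [sq_pos_of_pos (sub_pos.2 hr)]

theorem norm_mobius_lt_one (ha : ‖a‖ < 1) (hz : ‖z‖ < 1) : ‖mobius a z‖ < 1 :=
  (norm_mobius_le (max_lt ha hz) (le_max_left _ _) (le_max_right _ _)).trans_lt
    (two_mul_div_one_add_sq_lt_one (max_lt ha hz))

theorem mapsTo_mobius (ha : ‖a‖ < 1) : MapsTo (mobius a) (ball 0 1) (ball 0 1) := fun _ hz ↦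
  mem_ball_zero_iff.2 (norm_mobius_lt_one ha (mem_ball_zero_iff.1 hz))

theorem differentiableOn_mobius (ha : ‖a‖ < 1) : DifferentiableOn ℂ (mobius a) (ball 0 1) :=
  fun z hz ↦ DifferentiableAt.differentiableWithinAt <|
    (differentiableAt_id.sub_const a).div (by fun_prop)
      (mobius_denom_ne_zero ha (mem_ball_zero_iff.1 hz).le)

theorem mobius_neg_mobius (ha : ‖a‖ < 1) (hz : ‖z‖ ≤ 1) :
    mobius (-a) (mobius a z) = z := by
  have hden := mobius_denom_ne_zero ha hz
  have haa : 1 - conj a * a ≠ 0 := mobius_denom_ne_zero ha ha.le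
  rw [mobius, mobius, map_neg, neg_mul, sub_neg_eq_add, sub_neg_eq_add, div_add' _ _ _ hden,
    mul_div_assoc', one_add_div hden, div_div_div_cancel_right₀ hden,
    div_eq_iff (by contrapose! haa; linear_combination haa)]
  ring

theorem mobius_eq_zero_iff (ha : ‖a‖ < 1) (hz : ‖z‖ ≤ 1) : mobius a z = 0 ↔ z = a := by
  rw [mobius, div_eq_zero_iff, sub_eq_zero, or_iff_left (mobius_denom_ne_zero ha hz)]

theorem eq_of_norm_mobius_le_mul_self {k : ℝ} (hk : k < 1) (ha : ‖a‖ < 1) (hz : ‖z‖ ≤ 1)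
    (h : ‖mobius a z‖ ≤ k * ‖mobius a z‖) : z = a := by
  rw [← mobius_eq_zero_iff ha hz, ← norm_eq_zero]
  nlinarith [norm_nonneg (mobius a z)]

end Mobius

theorem norm_mobius_apply_le_of_mapsTo {f : ℂ → ℂ} {r : ℝ}
    (hd : DifferentiableOn ℂ f (ball 0 1)) (hf : MapsTo f (ball 0 1) (closedBall 0 r))
    (hr : r < 1) {z w : ℂ} (hz : z ∈ ball 0 1) (hw : w ∈ ball 0 1) :
    ‖mobius (f w) (f z)‖ ≤ 2 * r / (1 + r ^ 2) * ‖mobius w z‖ := by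
  have hw' : ‖w‖ < 1 := mem_ball_zero_iff.1 hw
  have hnw : ‖-w‖ < 1 := by rwa [norm_neg]
  have hfw : ‖f w‖ ≤ r := mem_closedBall_zero_iff.1 (hf hw)
  set φ := mobius (f w) ∘ f ∘ mobius (-w)
  have hφ0 : φ 0 = 0 := by simp [φ, mobius]
  have hφd : DifferentiableOn ℂ φ (ball 0 1) :=
    (differentiableOn_mobius (hfw.trans_lt hr)).comp
      (hd.comp (differentiableOn_mobius hnw) (mapsTo_mobius hnw))
      ((hf.mono_right (closedBall_subset_ball hr)).comp (mapsTo_mobius hnw))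
  have hφmaps : MapsTo φ (ball 0 1) (closedBall (φ 0) (2 * r / (1 + r ^ 2))) := fun ζ hζ ↦ by
    rw [hφ0, mem_closedBall_zero_iff]
    exact norm_mobius_le hr hfw (mem_closedBall_zero_iff.1 (hf (mapsTo_mobius hnw hζ)))
  have hφz : φ (mobius w z) = mobius (f w) (f z) := by
    simp only [φ, Function.comp_apply, mobius_neg_mobius hw' (mem_ball_zero_iff.1 hz).le]
  simpa [hφz, hφ0] using
    Complex.dist_le_div_mul_dist_of_mapsTo_ball hφd hφmaps (mapsTo_mobius hw' hz)

theorem exists_fixedPoint_of_mapsTo_closedBall {f : ℂ → ℂ} {r : ℝ}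
    (hd : DifferentiableOn ℂ f (ball 0 1)) (hf : MapsTo f (ball 0 1) (closedBall 0 r))
    (hr : r < 1) : ∃ p ∈ ball (0 : ℂ) 1, f p = p := by
  have hsub : closedBall (0 : ℂ) r ⊆ ball 0 1 := closedBall_subset_ball hr
  have hr0 : 0 ≤ r := nonempty_closedBall.1 ⟨_, hf (mem_ball_self one_pos)⟩
  have hfc : ContinuousOn f (closedBall 0 r) := hd.continuousOn.mono hsub
  have hcont : ContinuousOn (fun z ↦ ‖mobius z (f z)‖) (closedBall 0 r) := by
    refine ((hfc.sub continuousOn_id).div (continuousOn_const.sub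
      ((continuous_conj.comp_continuousOn continuousOn_id).mul hfc)) fun z hz ↦ ?_).norm
    exact mobius_denom_ne_zero (mem_ball_zero_iff.1 (hsub hz))
      ((mem_closedBall_zero_iff.1 (hf (hsub hz))).trans hr.le)
  obtain ⟨p, hp, hmin⟩ :=
    (isCompact_closedBall 0 r).exists_isMinOn (nonempty_closedBall.2 hr0) hcont
  have hfp : f p ∈ closedBall 0 r := hf (hsub hp)
  refine ⟨p, hsub hp, eq_of_norm_mobius_le_mul_self (two_mul_div_one_add_sq_lt_one hr)
    (mem_ball_zero_iff.1 (hsub hp)) ((mem_closedBall_zero_iff.1 hfp).trans hr.le) ?_⟩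
  calc ‖mobius p (f p)‖ ≤ ‖mobius (f p) (f (f p))‖ := hmin hfp
    _ ≤ _ := norm_mobius_apply_le_of_mapsTo hd hf hr (hsub hfp) (hsub hp)

theorem holomorphic_strict_selfmap_unique_fixed_point
    (f : ℂ → ℂ)
    (hcont : ContinuousOn f (closedBall (0 : ℂ) 1))
    (hdiff : DifferentiableOn ℂ f (ball (0 : ℂ) 1))
    (hmap : ∀ z ∈ closedBall (0 : ℂ) 1, ‖f z‖ < 1) :
    ∃! z, z ∈ ball (0 : ℂ) 1 ∧ f z = z := by
  obtain ⟨r, hr, hfr⟩ := exists_lt_subset_ball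
    ((isCompact_closedBall 0 1).image_of_continuousOn hcont).isClosed
    (image_subset_iff.2 fun z hz ↦ mem_ball_zero_iff.2 (hmap z hz))
  have hf : MapsTo f (ball 0 1) (closedBall 0 r) := fun z hz ↦
    ball_subset_closedBall (hfr (mem_image_of_mem f (ball_subset_closedBall hz)))
  obtain ⟨p, hp, hfp⟩ := exists_fixedPoint_of_mapsTo_closedBall hdiff hf hr
  refine ⟨p, ⟨hp, hfp⟩, fun q ⟨hq, hfq⟩ ↦ ?_⟩
  have hpq := norm_mobius_apply_le_of_mapsTo hdiff hf hr hq hp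
  rw [hfp, hfq] at hpq
  exact eq_of_norm_mobius_le_mul_self (two_mul_div_one_add_sq_lt_one hr)
    (mem_ball_zero_iff.1 hp) (mem_ball_zero_iff.1 hq).le hpq
end

section
/- If z : ℝ → ℂ solves the Riccati equation z' = c0(t) + c1(t) z + c2(t) z² where Re(conj(c0(t)) z + c1(t) + c2(t) z) < 0 for all z on the unit circle and all t, and |z(t₀)| = 1 for some t₀, then |z(t)| < 1 for all t > t₀. -/
/-!
Along a solution, `‖z‖²` has derivative `2 Re((c0 + c1 z + c2 z²) conj z)`, which on the unit
circle equals `2 Re(conj(c0) z + c1 + c2 z) < 0`. So `‖z‖²` can only cross the level `1`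
downwards: a fencing argument keeps it `≤ 1` after `t₀`, and it cannot return to `1` at a later
time `t`, since then `t` would maximise `‖z‖²` on `[t₀, t]`, forcing a nonnegative derivative.
-/

open Complex Set

theorem HasDerivAt.nonneg_of_isMaxOn_Icc {g : ℝ → ℝ} {g' a t : ℝ} (hg : HasDerivAt g g' t)
    (hat : a < t) (hmax : IsMaxOn g (Icc a t) t) : 0 ≤ g' := by
  have hcone : a - t ∈ posTangentConeAt (Icc a t) t :=
    sub_mem_posTangentConeAt_of_segment_subset (by simp [segment_eq_Icc', hat.le])
  have hslope := hmax.localize.hasFDerivWithinAt_nonpos hg.hasDerivWithinAt.hasFDerivWithinAt hcone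
  simp only [ContinuousLinearMap.toSpanSingleton_apply, smul_eq_mul] at hslope
  exact nonneg_of_mul_nonpos_right hslope (sub_neg.mpr hat)

theorem lt_of_hasDerivAt_neg_of_eq {g g' : ℝ → ℝ} {a c t : ℝ}
    (hg : ∀ x ∈ Icc a t, HasDerivAt g (g' x) x) (hneg : ∀ x ∈ Icc a t, g x = c → g' x < 0)
    (ha : g a ≤ c) (hat : a < t) : g t < c := by
  have hle : ∀ x ∈ Icc a t, g x ≤ c :=
    image_le_of_deriv_right_lt_deriv_boundary
      (fun x hx => (hg x hx).continuousAt.continuousWithinAt)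
      (fun x hx => (hg x (Ico_subset_Icc_self hx)).hasDerivWithinAt) ha
      (fun _ => hasDerivAt_const _ c)
      (fun x hx hgx => hneg x (Ico_subset_Icc_self hx) hgx)
  have ht : t ∈ Icc a t := ⟨hat.le, le_rfl⟩
  refine (hle t ht).lt_of_ne fun hgt => (hneg t ht hgt).not_ge ?_
  exact (hg t ht).nonneg_of_isMaxOn_Icc hat fun x hx => hgt ▸ hle x hx

theorem re_riccati_mul_conj_of_norm_eq_one {w a b d : ℂ} (hw : ‖w‖ = 1) :
    ((a + b * w + d * w ^ 2) * (starRingEnd ℂ) w).re = ((starRingEnd ℂ) a * w + b + d * w).re := by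
  have hww : w * (starRingEnd ℂ) w = 1 := by
    rw [mul_conj, normSq_eq_norm_sq, hw]; norm_num
  have hexpand : (a + b * w + d * w ^ 2) * (starRingEnd ℂ) w
      = a * (starRingEnd ℂ) w + b + d * w := by
    linear_combination (b + d * w) * hww
  rw [hexpand, add_re, add_re, add_re, add_re, ← conj_re (a * _)]
  simp

theorem riccati_strict_enters_disc_general
    (c0 c1 c2 : ℝ → ℂ)
    (hineq : ∀ (w : ℂ) (t : ℝ), ‖w‖ = 1 →
      ((starRingEnd ℂ) (c0 t) * w + c1 t + c2 t * w).re < 0)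
    (z : ℝ → ℂ)
    (hz : ∀ t, HasDerivAt z (c0 t + c1 t * z t + c2 t * (z t) ^ 2) t)
    (t₀ : ℝ) (h0 : ‖z t₀‖ = 1) :
    ∀ t, t₀ < t → ‖z t‖ < 1 := by
  intro t ht
  rw [← sq_lt_one_iff₀ (norm_nonneg _)]
  refine lt_of_hasDerivAt_neg_of_eq (g := fun x => ‖z x‖ ^ 2)
    (fun x _ => (hz x).norm_sq) (fun x _ hx => ?_) (by simp [h0]) ht
  have hx1 : ‖z x‖ = 1 := (pow_eq_one_iff_of_nonneg (norm_nonneg _) two_ne_zero).mp hx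
  rw [Complex.inner, re_riccati_mul_conj_of_norm_eq_one hx1]
  linarith [hineq (z x) x hx1]

theorem riccati_strict_enters_disc
    (c0 c1 c2 : ℝ → ℂ)
    (hc0 : Continuous c0) (hc1 : Continuous c1) (hc2 : Continuous c2)
    (hineq : ∀ (w : ℂ) (t : ℝ), ‖w‖ = 1 →
      ((starRingEnd ℂ) (c0 t) * w + c1 t + c2 t * w).re < 0)
    (z : ℝ → ℂ)
    (hz : ∀ t, HasDerivAt z (c0 t + c1 t * z t + c2 t * (z t) ^ 2) t)
    (t₀ : ℝ) (h0 : ‖z t₀‖ = 1) :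
    ∀ t, t₀ < t → ‖z t‖ < 1 :=
  riccati_strict_enters_disc_general c0 c1 c2 hineq z hz t₀ h0
end

section
/- Suppose z : ℝ → ℂ is a 2π-periodic solution of z' = c0(t) + c1(t) z + c2(t) z² with 2π-periodic continuous coefficients satisfying Re(conj(c0(t)) z + c1(t) + c2(t) z) < 0 for all |z| = 1 and all t. Then either |z(t)| < 1 for all t, or |z(t)| > 1 for all t; no periodic solution touches the unit circle. -/
open Complex Real

/-!
On the unit circle the Riccati field points strictly inwards: `d/dt ‖z‖² = 2⟪z, z'⟫` is negative
whenever `‖z‖ = 1`. Hence `‖z‖²` crosses the level `1` only downwards and never climbs back above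
it, so a solution on the circle at time `t` that returns there at `t + 2π` would make `t + 2π` a
local maximum of `‖z‖²` with negative derivative. Thus `‖z‖ ≠ 1` everywhere, and the intermediate
value theorem gives the dichotomy.
-/

theorem le_of_hasDerivAt_neg_at_level {f f' : ℝ → ℝ} {a c : ℝ}
    (hf : ∀ t, HasDerivAt f (f' t) t) (hlevel : ∀ t, f t = c → f' t < 0) (ha : f a ≤ c)
    {t : ℝ} (hat : a ≤ t) : f t ≤ c :=
  image_le_of_deriv_right_lt_deriv_boundary (f := f) (B := fun _ => c) (B' := fun _ => 0)
    (fun s _ => (hf s).continuousAt.continuousWithinAt) (fun s _ => (hf s).hasDerivWithinAt) ha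
    (fun _ => hasDerivAt_const _ _) (fun s _ hs => hlevel s hs) ⟨hat, le_rfl⟩

theorem Function.Periodic.ne_of_hasDerivAt_neg_at_level {f f' : ℝ → ℝ} {p c : ℝ}
    (hper : Function.Periodic f p) (hp : 0 < p)
    (hf : ∀ t, HasDerivAt f (f' t) t) (hlevel : ∀ t, f t = c → f' t < 0) (t : ℝ) :
    f t ≠ c := by
  intro ht
  have hmax : IsLocalMax f (t + p) := by
    filter_upwards [Ici_mem_nhds (show t < t + p by linarith)] with s hs
    rw [hper, ht]
    exact le_of_hasDerivAt_neg_at_level hf hlevel ht.le hs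
  have hc : f (t + p) = c := by rw [hper, ht]
  exact (hlevel _ hc).ne (hmax.hasDerivAt_eq_zero (hf _))

theorem Continuous.forall_lt_or_forall_gt_of_ne {f : ℝ → ℝ} (hf : Continuous f) {c : ℝ}
    (hne : ∀ t, f t ≠ c) : (∀ t, f t < c) ∨ (∀ t, c < f t) := by
  by_contra! h
  obtain ⟨⟨a, ha⟩, ⟨b, hb⟩⟩ := h
  obtain ⟨t, ht⟩ := intermediate_value_univ b a hf ⟨hb, ha⟩
  exact hne t ht

theorem inner_riccati_field_of_norm_eq_one (c0 c1 c2 : ℂ) {w : ℂ} (hw : ‖w‖ = 1) :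
    inner ℝ w (c0 + c1 * w + c2 * w ^ 2) = ((starRingEnd ℂ) c0 * w + c1 + c2 * w).re := by
  have hw' : (starRingEnd ℂ) w * w = 1 := by
    rw [← normSq_eq_conj_mul_self, normSq_eq_norm_sq, hw]; norm_num
  have : (c0 + c1 * w + c2 * w ^ 2) * (starRingEnd ℂ) w
      = (starRingEnd ℂ) w * c0 + c1 + c2 * w := by
    linear_combination (c1 + c2 * w) * hw'
  rw [Complex.inner, this, add_re, add_re, add_re, add_re, ← conj_re ((starRingEnd ℂ) w * c0),
    map_mul, conj_conj, mul_comm w]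

theorem periodic_riccati_solution_avoids_circle_general
    (c0 c1 c2 : ℝ → ℂ)
    (hineq : ∀ (w : ℂ) (t : ℝ), ‖w‖ = 1 →
      ((starRingEnd ℂ) (c0 t) * w + c1 t + c2 t * w).re < 0)
    (z : ℝ → ℂ)
    (hz : ∀ t, HasDerivAt z (c0 t + c1 t * z t + c2 t * (z t) ^ 2) t)
    (hzper : ∀ t, z (t + 2 * π) = z t) :
    (∀ t, ‖z t‖ < 1) ∨ (∀ t, 1 < ‖z t‖) := by
  have hcross : ∀ t, ‖z t‖ ^ 2 = 1 →
      2 * inner ℝ (z t) (c0 t + c1 t * z t + c2 t * z t ^ 2) < 0 := by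
    intro t ht
    have hnorm : ‖z t‖ = 1 := (pow_eq_one_iff_of_nonneg (norm_nonneg _) two_ne_zero).1 ht
    rw [inner_riccati_field_of_norm_eq_one _ _ _ hnorm]
    linarith [hineq (z t) t hnorm]
  have hper : Function.Periodic (fun t => ‖z t‖ ^ 2) (2 * π) := fun t => by simp only [hzper]
  have hoff : ∀ t, ‖z t‖ ≠ 1 := fun t ht =>
    hper.ne_of_hasDerivAt_neg_at_level two_pi_pos (fun t => (hz t).norm_sq) hcross t (by simp [ht])
  have hzc : Continuous z := continuous_iff_continuousAt.2 fun t => (hz t).continuousAt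
  exact hzc.norm.forall_lt_or_forall_gt_of_ne hoff

theorem periodic_riccati_solution_avoids_circle
    (c0 c1 c2 : ℝ → ℂ)
    (hc0 : Continuous c0) (hc1 : Continuous c1) (hc2 : Continuous c2)
    (hper0 : ∀ t, c0 (t + 2 * π) = c0 t)
    (hper1 : ∀ t, c1 (t + 2 * π) = c1 t)
    (hper2 : ∀ t, c2 (t + 2 * π) = c2 t)
    (hineq : ∀ (w : ℂ) (t : ℝ), ‖w‖ = 1 →
      ((starRingEnd ℂ) (c0 t) * w + c1 t + c2 t * w).re < 0)
    (z : ℝ → ℂ)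
    (hz : ∀ t, HasDerivAt z (c0 t + c1 t * z t + c2 t * (z t) ^ 2) t)
    (hzper : ∀ t, z (t + 2 * π) = z t) :
    (∀ t, ‖z t‖ < 1) ∨ (∀ t, 1 < ‖z t‖) :=
  periodic_riccati_solution_avoids_circle_general c0 c1 c2 hineq z hz hzper
end
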